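/- For every integer k ≥ 2, the k × k grid Γ_k is a strong immersion of the graph W⁺_k obtained from the k-wall by doubling every edge that lies on both a vertical and a horizontal path; moreover there is a Γ_k-strong-immersion model whose set of branch vertices is {(i, 2j+1) : 1 ≤ i ≤ k+1, 0 ≤ j ≤ k}. -/

import Mathlib

open scoped Classical

/-- A finite loopless multigraph: `E` indexes edges, `ends e` gives the endpoints. -/
structure Multigraph (V : Type) (E : Type) where
  ends : E → Sym2 V
  loopless : ∀ e, ¬ (ends e).IsDiag

namespace Multigraph

variable {V E V1 E1 V2 E2 : Type}

/-- Multidegree: number of edges (with multiplicity) incident with `v`. -/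
noncomputable def mdeg (G : Multigraph V E) [Fintype E] (v : V) : ℕ :=
  (Finset.univ.filter (fun e => v ∈ G.ends e)).card

/-- Walks in a multigraph, remembering which edge instance is used at each step. -/
inductive Walk (G : Multigraph V E) : V → V → Type where
  | nil (v : V) : Walk G v v
  | cons {u v w : V} (e : E) (he : G.ends e = s(u, v)) (p : Walk G v w) : Walk G u w

namespace Walk

variable {G : Multigraph V E}

def support : {u v : V} → G.Walk u v → List V
  | u, _, .nil _ => [u]
  | u, _, .cons _ _ p => u :: p.support

def edges : {u v : V} → G.Walk u v → List E
  | _, _, .nil _ => []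
  | _, _, .cons e _ p => e :: p.edges

/-- A walk is a path when its vertices are pairwise distinct. -/
def IsPath {u v : V} (p : G.Walk u v) : Prop := p.support.Nodup

/-- The internal vertices of a walk (all vertices except the two endpoints). -/
def interior {u v : V} (p : G.Walk u v) : List V := p.support.tail.dropLast

end Walk

/-- An `H`-immersion model in `G`. -/
structure ImmersionModel (H : Multigraph V1 E1) (G : Multigraph V E) where
  vmap : V1 → V
  vmap_inj : Function.Injective vmap
  src : E1 → V1
  tgt : E1 → V1
  ends_eq : ∀ e, H.ends e = s(src e, tgt e)
  path : ∀ e, G.Walk (vmap (src e)) (vmap (tgt e))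
  path_isPath : ∀ e, (path e).IsPath
  edge_disjoint : ∀ e₁ e₂, e₁ ≠ e₂ → ∀ x, x ∈ (path e₁).edges → x ∉ (path e₂).edges

namespace ImmersionModel

variable {H : Multigraph V1 E1} {G : Multigraph V E}

/-- The edges of the immersion expansion associated with the model. -/
def edgeSet (m : ImmersionModel H G) : Set E := {x | ∃ e, x ∈ (m.path e).edges}

/-- The vertices of the immersion expansion associated with the model. -/
def vertSet (m : ImmersionModel H G) : Set V :=
  {x | (∃ a, m.vmap a = x) ∨ ∃ e, x ∈ (m.path e).support}

end ImmersionModel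

/-- `G` contains `H` as an immersion. -/
def Immersed (H : Multigraph V1 E1) (G : Multigraph V E) : Prop :=
  Nonempty (ImmersionModel H G)

/-- Deleting a set of edges from a multigraph. -/
def deleteEdges (G : Multigraph V E) (F : Set E) : Multigraph V {e : E // e ∉ F} where
  ends e := G.ends e.1
  loopless e := G.loopless e.1

/-- The minimum size of an `H`-cover of `G`: a set of edges meeting every
`H`-immersion expansion. (By convention `sInf ∅ = 0`.) -/
noncomputable def coverNum (H : Multigraph V1 E1) (G : Multigraph V E) : ℕ :=
  sInf {n | ∃ C : Finset E, ¬ Immersed H (G.deleteEdges ↑C) ∧ C.card = n}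

/-- The maximum size of an `H`-packing in `G`: a collection of pairwise
edge-disjoint `H`-immersion expansions. -/
noncomputable def packNum (H : Multigraph V1 E1) (G : Multigraph V E) : ℕ :=
  sSup {n | ∃ f : Fin n → ImmersionModel H G,
    ∀ i j, i ≠ j → Disjoint (f i).edgeSet (f j).edgeSet}

/-- Connectivity of a multigraph. -/
def Connected (G : Multigraph V E) : Prop :=
  Nonempty V ∧ ∀ u v : V, Nonempty (G.Walk u v)

/-- Reachability in `G` avoiding the vertex set `X`. -/
def ReachAvoid (G : Multigraph V E) (X : Set V) (u v : V) : Prop :=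
  ∃ p : G.Walk u v, ∀ x ∈ p.support, x ∉ X

/-- The underlying simple graph of a multigraph. -/
def toSimple (G : Multigraph V E) : SimpleGraph V where
  Adj u v := u ≠ v ∧ ∃ e, G.ends e = s(u, v)
  symm := ⟨by
    rintro u v ⟨h, e, he⟩
    exact ⟨h.symm, e, by rw [he, Sym2.eq_swap]⟩⟩
  loopless := ⟨fun v h => h.1 rfl⟩

end Multigraph

section Minor

/-- `A` is a minor of `B` (branch-set/minor-model definition). -/
def SimpleGraphMinorOf {α β : Type} (A : SimpleGraph α) (B : SimpleGraph β) : Prop :=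
  ∃ C : α → Set β,
    (∀ a, (C a).Nonempty) ∧
    (∀ a, (B.induce (C a)).Connected) ∧
    (Pairwise fun a a' => Disjoint (C a) (C a')) ∧
    (∀ a a', A.Adj a a' → ∃ x ∈ C a, ∃ y ∈ C a', B.Adj x y)

end Minor

namespace Multigraph

variable {V E : Type}

/-- Planarity of a loopless multigraph, via Wagner's theorem: no `K₅` and
no `K₃,₃` minor in the underlying simple graph. -/
def Planar (G : Multigraph V E) : Prop :=
  ¬ SimpleGraphMinorOf (SimpleGraph.completeGraph (Fin 5)) G.toSimple ∧
  ¬ SimpleGraphMinorOf (completeBipartiteGraph (Fin 3) (Fin 3)) G.toSimple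

lemma isDiag_map_inl {α β : Type} (p : Sym2 α) :
    (p.map (Sum.inl : α → α ⊕ β)).IsDiag ↔ p.IsDiag := by
  induction p using Sym2.ind with
  | _ a b => simp

/-- `G⁺`: attach to every vertex `v` a gadget of two new vertices `(v,false)`,
`(v,true)` joined by a double edge, each joined to `v` by a single edge. -/
def plus (G : Multigraph V E) :
    Multigraph (V ⊕ (V × Bool)) (E ⊕ ((V × Fin 2) ⊕ (V × Bool))) where
  ends
    | .inl e => (G.ends e).map .inl
    | .inr (.inl (v, _)) => s(.inr (v, false), .inr (v, true))
    | .inr (.inr (v, b)) => s(.inl v, .inr (v, b))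
  loopless := by
    rintro (e | ⟨v, i⟩ | ⟨v, b⟩) h
    · exact G.loopless e ((isDiag_map_inl _).1 h)
    · simp at h
    · simp at h

/-- `G*`: attach, at every vertex `v` and for every `i ∈ {1,…,mdeg v}`, a gadget of two
new vertices joined by a double edge, each joined to `v` by a single edge. -/
noncomputable def star (G : Multigraph V E) [Fintype E] :
    Multigraph (V ⊕ ((Σ v : V, Fin (G.mdeg v)) × Bool))
      (E ⊕ (((Σ v : V, Fin (G.mdeg v)) × Fin 2) ⊕ ((Σ v : V, Fin (G.mdeg v)) × Bool))) where
  ends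
    | .inl e => (G.ends e).map .inl
    | .inr (.inl (p, _)) => s(.inr (p, false), .inr (p, true))
    | .inr (.inr (p, b)) => s(.inl p.1, .inr (p, b))
  loopless := by
    rintro (e | ⟨p, i⟩ | ⟨p, b⟩) h
    · exact G.loopless e ((isDiag_map_inl _).1 h)
    · simp at h
    · simp at h

/-- The subdivision of `G` in which the edge `e` (oriented from `src e` to `tgt e`)
is subdivided `n e` times, i.e. replaced by a path with `n e` internal vertices. -/
def subdivide (G : Multigraph V E) (src tgt : E → V)
    (hst : ∀ e, G.ends e = s(src e, tgt e)) (n : E → ℕ) :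
    Multigraph (V ⊕ (Σ e : E, Fin (n e))) (Σ e : E, Fin (n e + 1)) where
  ends := fun q =>
    s(if _ : q.2.val = 0 then Sum.inl (src q.1)
        else Sum.inr ⟨q.1, ⟨q.2.val - 1, by have := q.2.isLt; omega⟩⟩,
      if _ : q.2.val = n q.1 then Sum.inl (tgt q.1)
        else Sum.inr ⟨q.1, ⟨q.2.val, by have := q.2.isLt; omega⟩⟩)
  loopless := by
    rintro ⟨e, i⟩ h
    rw [Sym2.mk_isDiag_iff] at h
    split_ifs at h with h1 h2 h2 <;>
      first
        | exact Sum.noConfusion h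
        | (have hl := G.loopless e
           rw [hst e, Sym2.mk_isDiag_iff] at hl
           exact hl (Sum.inl.inj h))
        | (have h3 := Sum.inr.inj h
           have h4 := congrArg (fun x : (Σ e : E, Fin (n e)) => x.2.val) h3
           dsimp only at h1 h4
           omega)

end Multigraph

namespace Multigraph

/-- The multigraph underlying a simple graph. -/
def ofSimple {α : Type} (S : SimpleGraph α) : Multigraph α S.edgeSet where
  ends e := e.1
  loopless e := S.not_isDiag_of_mem_edgeSet e.2

/-- A strong immersion model: additionally, no branch vertex is an internal
vertex of a certifying path. -/
structure StrongImmersionModel {V1 E1 V E : Type} (H : Multigraph V1 E1) (G : Multigraph V E)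
    extends ImmersionModel H G where
  not_internal : ∀ (e : E1) (x : V1), vmap x ∉ (path e).interior

/-- An `H`-topological-minor model in `G`: certifying paths are internally
vertex-disjoint and their internal vertices avoid the branch vertices. -/
structure TopMinorModel {V1 E1 V E : Type} (H : Multigraph V1 E1) (G : Multigraph V E) where
  vmap : V1 → V
  vmap_inj : Function.Injective vmap
  src : E1 → V1
  tgt : E1 → V1
  ends_eq : ∀ e, H.ends e = s(src e, tgt e)
  path : ∀ e, G.Walk (vmap (src e)) (vmap (tgt e))
  path_isPath : ∀ e, (path e).IsPath
  internal_disjoint : ∀ e₁ e₂, e₁ ≠ e₂ → ∀ x, x ∈ (path e₁).interior → x ∉ (path e₂).support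
  internal_avoid : ∀ (e : E1) (x : V1), vmap x ∉ (path e).interior

end Multigraph

section Walls

/-- The `m × n` grid graph. -/
def gridGraph (m n : ℕ) : SimpleGraph (Fin m × Fin n) where
  Adj p q := (p.1 = q.1 ∧ (p.2.val + 1 = q.2.val ∨ q.2.val + 1 = p.2.val)) ∨
             (p.2 = q.2 ∧ (p.1.val + 1 = q.1.val ∨ q.1.val + 1 = p.1.val))
  symm := ⟨by rintro p q (⟨h, h'⟩ | ⟨h, h'⟩) <;> [left; right] <;> exact ⟨h.symm, h'.symm⟩⟩
  loopless := ⟨by rintro p (⟨-, h | h⟩ | ⟨-, h | h⟩) <;> omega⟩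

/-- The `k×k` grid `Γ_k` as a multigraph. -/
def Gamma (k : ℕ) : Multigraph (Fin k × Fin k) (gridGraph k k).edgeSet :=
  Multigraph.ofSimple (gridGraph k k)

/-- The `(k+1) × (2k+2)` grid with the vertical edges `{(x,y),(x+1,y)}` with `x+y` odd
(in 1-indexed coordinates) removed. -/
def wallPre (k : ℕ) : SimpleGraph (Fin (k + 1) × Fin (2 * k + 2)) where
  Adj p q := (gridGraph (k + 1) (2 * k + 2)).Adj p q ∧
    ¬ (p.2 = q.2 ∧ (min p.1.val q.1.val + p.2.val) % 2 = 1)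
  symm := ⟨by
    rintro p q ⟨h, h'⟩
    refine ⟨(gridGraph _ _).symm.symm _ _ h, fun ⟨hc, hp⟩ => h' ⟨hc.symm, ?_⟩⟩
    rw [Nat.min_comm] at hp
    rw [← hc]
    exact hp⟩
  loopless := ⟨fun p h => (gridGraph _ _).loopless.irrefl p h.1⟩

/-- Degree of a vertex in `wallPre k`. -/
noncomputable def wallPreDeg (k : ℕ) (v : Fin (k + 1) × Fin (2 * k + 2)) : ℕ :=
  (Finset.univ.filter (fun w => (wallPre k).Adj v w)).card

/-- The vertex set of the `k`-wall: vertices of degree `≠ 1`. -/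
def wallVerts (k : ℕ) : Set (Fin (k + 1) × Fin (2 * k + 2)) :=
  {v | wallPreDeg k v ≠ 1}

/-- The `k`-wall `W_k`, as a simple graph. -/
noncomputable def wallSimple (k : ℕ) : SimpleGraph (wallVerts k) :=
  (wallPre k).induce (wallVerts k)

/-- The `k`-wall `W_k`, as a multigraph. -/
noncomputable def Wall (k : ℕ) : Multigraph (wallVerts k) (wallSimple k).edgeSet :=
  Multigraph.ofSimple (wallSimple k)

/-- The doubled edges of `W⁺_k`: the horizontal edges lying on both a vertical and a
horizontal path of the wall, i.e. those whose lower column index is odd (1-indexed). -/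
def isDoubledEdge (k : ℕ) (p : Sym2 (wallVerts k)) : Prop :=
  ∃ a b : wallVerts k, p = s(a, b) ∧ (a : Fin (k + 1) × Fin (2 * k + 2)).1 = (b : Fin (k + 1) × Fin (2 * k + 2)).1 ∧
    (b : Fin (k + 1) × Fin (2 * k + 2)).2.val = (a : Fin (k + 1) × Fin (2 * k + 2)).2.val + 1 ∧
    (a : Fin (k + 1) × Fin (2 * k + 2)).2.val % 2 = 0

/-- `W⁺_k`: the `k`-wall with a second parallel copy of every doubled edge. -/
noncomputable def WallPlus (k : ℕ) :
    Multigraph (wallVerts k)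
      ((wallSimple k).edgeSet ⊕ {p : Sym2 (wallVerts k) // p ∈ (wallSimple k).edgeSet ∧ isDoubledEdge k p}) where
  ends
    | .inl e => e.1
    | .inr e => e.1
  loopless := by
    rintro (e | e)
    · exact (wallSimple k).not_isDiag_of_mem_edgeSet e.2
    · exact (wallSimple k).not_isDiag_of_mem_edgeSet e.2.1

end Walls

namespace Multigraph

variable {V E : Type}

/-- Tree-partition width of a multigraph (bags may be empty; w.l.o.g. bags are
indexed by the vertices themselves). -/
noncomputable def tpw (G : Multigraph V E) [Fintype V] [Fintype E] : ℕ :=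
  sInf {w | ∃ T : SimpleGraph V, T.IsTree ∧ ∃ bag : V → V,
    (Fintype.card V = 1 ∨
      ∀ (e : E) (a b : V), G.ends e = s(a, b) → bag a = bag b ∨ T.Adj (bag a) (bag b)) ∧
    (∀ t : V, (Finset.univ.filter (fun v => bag v = t)).card ≤ w) ∧
    (∀ t t' : V, T.Adj t t' →
      (Finset.univ.filter (fun e : E =>
        ∃ a b, G.ends e = s(a, b) ∧ bag a = t ∧ bag b = t')).card ≤ w)}

section ThreeCenter

variable {W : Type} [Fintype W]

/-- Degree of `v` in the state `(A, m)`: `A` is the set of remaining vertices and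
`m` gives edge multiplicities. -/
noncomputable def stDeg (A : Finset W) (m : Sym2 W → ℕ) (v : W) : ℕ :=
  ∑ w ∈ A.erase v, m s(v, w)

/-- One reduction step of the 3-center construction relative to the marked set `X`:
delete a vertex of degree one, or suppress (dissolve) a vertex of degree two not in `X`. -/
inductive CStep (X : Set W) :
    Finset W × (Sym2 W → ℕ) → Finset W × (Sym2 W → ℕ) → Prop
  | delete (A : Finset W) (m : Sym2 W → ℕ) (v : W) (hv : v ∈ A) (hd : stDeg A m v = 1) :
      CStep X (A, m) (A.erase v, fun p => if v ∈ p then 0 else m p)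
  | suppress (A : Finset W) (m : Sym2 W → ℕ) (v a b : W) (hv : v ∈ A) (hx : v ∉ X)
      (ha : a ∈ A) (hb : b ∈ A) (hav : a ≠ v) (hbv : b ≠ v) (hd : stDeg A m v = 2)
      (h1 : 1 ≤ m s(v, a)) (h2 : a = b → m s(v, a) = 2) (h3 : a ≠ b → 1 ≤ m s(v, b)) :
      CStep X (A, m) (A.erase v,
        fun p => if v ∈ p then 0 else if a ≠ b ∧ p = s(a, b) then m p + 1 else m p)

/-- The number of vertices of the 3-center of the marked multigraph given by the
state `(A, m)` with marked set `X`: the size of a reduct on which no step applies. -/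
noncomputable def centerSize (X : Set W) (A : Finset W) (m : Sym2 W → ℕ) : ℕ :=
  sInf {c | ∃ s : Finset W × (Sym2 W → ℕ),
    Relation.ReflTransGen (CStep X) (A, m) s ∧ (∀ s', ¬ CStep X s s') ∧ s.1.card = c}

end ThreeCenter

section TCW

variable {n : ℕ}

/-- The consolidation map for the torso at node `t` of a tree-cut decomposition:
a vertex whose bag is `t` is kept, and any other vertex is sent to the peripheral
vertex indexed by the neighbour `u` of `t` whose branch contains its bag. -/
noncomputable def consMap (T : SimpleGraph (Fin n)) (bag : V → Fin n) (t : Fin n) (a : V) :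
    V ⊕ Fin n :=
  if bag a = t then Sum.inl a
  else if h : ∃ u, T.Adj t u ∧ (T.deleteEdges {s(t, u)}).Reachable (bag a) u
    then Sum.inr h.choose else Sum.inl a

/-- The vertex set of the torso at `t`: the bag of `t` together with one peripheral
vertex for each neighbour of `t` in the decomposition tree. -/
noncomputable def torsoA [Fintype V] (T : SimpleGraph (Fin n)) (bag : V → Fin n) (t : Fin n) :
    Finset (V ⊕ Fin n) :=
  (Finset.univ.filter (fun a : V => bag a = t)).image Sum.inl ∪
    (Finset.univ.filter (fun u : Fin n => T.Adj t u)).image Sum.inr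

/-- The edge multiplicities of the torso at `t`. -/
noncomputable def torsoM (G : Multigraph V E) [Fintype E] (T : SimpleGraph (Fin n))
    (bag : V → Fin n) (t : Fin n) : Sym2 (V ⊕ Fin n) → ℕ :=
  fun p => if p.IsDiag then 0
    else (Finset.univ.filter (fun e : E => (G.ends e).map (consMap T bag t) = p)).card

/-- The adhesion of the tree edge `{t, t'}`: the number of edges of `G` whose endpoints
lie in bags on different sides of the edge. -/
noncomputable def adhE (G : Multigraph V E) [Fintype E] (T : SimpleGraph (Fin n))
    (bag : V → Fin n) (t t' : Fin n) : ℕ :=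
  (Finset.univ.filter (fun e : E => ∃ a b, G.ends e = s(a, b) ∧
    (T.deleteEdges {s(t, t')}).Reachable (bag a) t ∧
    (T.deleteEdges {s(t, t')}).Reachable (bag b) t')).card

/-- Tree-cut width of a multigraph: the minimum, over tree-cut decompositions, of
the maximum of all adhesions and of the numbers of vertices of the 3-centers
of the torsos. -/
noncomputable def tcw (G : Multigraph V E) [Fintype V] [Fintype E] : ℕ :=
  sInf {w | ∃ (n : ℕ) (T : SimpleGraph (Fin n)), T.IsTree ∧ ∃ bag : V → Fin n,
    (∀ t t', T.Adj t t' → adhE G T bag t t' ≤ w) ∧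
    (∀ t, centerSize (Sum.inl '' {a | bag a = t}) (torsoA T bag t) (torsoM G T bag t) ≤ w)}

end TCW

end Multigraph


/-! Send the grid vertex `(i, j)` to the wall vertex `(i, 2j)` (0-indexed). A horizontal grid edge
follows its wall row through column `2j + 1`. A vertical grid edge leaving an even row uses the
wall's vertical edge in column `2j`; from an odd row that edge is missing, and the path detours
through column `2j + 1`, entering and leaving it along the second copies of the two horizontal
edges at `(i, 2j)` and `(i + 1, 2j)`. All internal vertices lie in odd columns, away from the
branch vertices, and the coordinates of a wall edge determine the only grid edge whose path can
use it, which gives edge-disjointness. -/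

open Multigraph

namespace Multigraph.Walk

variable {V E : Type} {G : Multigraph V E}

@[simp] lemma support_nil (v : V) : (nil (G := G) v).support = [v] := rfl

@[simp] lemma support_cons {u v w : V} (e : E) (he : G.ends e = s(u, v)) (p : G.Walk v w) :
    (cons e he p).support = u :: p.support := rfl

@[simp] lemma edges_nil (v : V) : (nil (G := G) v).edges = [] := rfl

@[simp] lemma edges_cons {u v w : V} (e : E) (he : G.ends e = s(u, v)) (p : G.Walk v w) :
    (cons e he p).edges = e :: p.edges := rfl

lemma edges_disjoint_of_owner {ι α : Type} {s t : ι → V} (path : ∀ i, G.Walk (s i) (t i))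
    (owner : E → α) (code : ι → α) (hcode : Function.Injective code)
    (howner : ∀ i, ∀ x ∈ (path i).edges, owner x = code i) :
    ∀ i j, i ≠ j → ∀ x, x ∈ (path i).edges → x ∉ (path j).edges :=
  fun i j hij x hi hj => hij (hcode ((howner i x hi).symm.trans (howner j x hj)))

end Multigraph.Walk

section Wall

variable {k : ℕ}

lemma wallPre_adj_iff (p q : Fin (k + 1) × Fin (2 * k + 2)) :
    (wallPre k).Adj p q ↔
      (p.1.val = q.1.val ∧ (p.2.val + 1 = q.2.val ∨ q.2.val + 1 = p.2.val)) ∨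
      (p.2.val = q.2.val ∧ (p.1.val + 1 = q.1.val ∨ q.1.val + 1 = p.1.val) ∧
        (min p.1.val q.1.val + p.2.val) % 2 = 0) := by
  simp only [wallPre, gridGraph, Fin.ext_iff]
  omega

lemma mem_wallVerts_of_adj {v a b : Fin (k + 1) × Fin (2 * k + 2)} (ha : (wallPre k).Adj v a)
    (hb : (wallPre k).Adj v b) (hab : a ≠ b) : v ∈ wallVerts k := by
  have : 1 < wallPreDeg k v := Finset.one_lt_card.2 ⟨a, by simpa, b, by simpa, hab⟩
  exact this.ne'

lemma mem_wallVerts {x y : ℕ} (hx : x < k) (hy : y < 2 * k) :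
    ((⟨x, by omega⟩, ⟨y, by omega⟩) : Fin (k + 1) × Fin (2 * k + 2)) ∈ wallVerts k := by
  have hright :
      (wallPre k).Adj (⟨x, by omega⟩, ⟨y, by omega⟩) (⟨x, by omega⟩, ⟨y + 1, by omega⟩) := by
    simp [wallPre_adj_iff]
  rcases Nat.eq_zero_or_pos y with rfl | hy0
  · -- in column `0` the vertical edge leaves even rows downwards and odd rows upwards
    rcases Nat.even_or_odd x with ⟨r, rfl⟩ | ⟨r, rfl⟩
    · exact mem_wallVerts_of_adj hright (b := (⟨r + r + 1, by omega⟩, ⟨0, by omega⟩))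
        (by simp [wallPre_adj_iff]; omega) (by simp [Prod.ext_iff])
    · exact mem_wallVerts_of_adj hright (b := (⟨2 * r, by omega⟩, ⟨0, by omega⟩))
        (by simp [wallPre_adj_iff]) (by simp [Prod.ext_iff])
  · exact mem_wallVerts_of_adj hright (b := (⟨x, by omega⟩, ⟨y - 1, by omega⟩))
      (by simp [wallPre_adj_iff]; omega) (by simp [Prod.ext_iff]; omega)

def wallVertex (x y : ℕ) (hx : x < k) (hy : y < 2 * k) : wallVerts k :=
  ⟨(⟨x, by omega⟩, ⟨y, by omega⟩), mem_wallVerts hx hy⟩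

@[simp] lemma coe_wallVertex {x y : ℕ} (hx : x < k) (hy : y < 2 * k) :
    (wallVertex x y hx hy : Fin (k + 1) × Fin (2 * k + 2)) =
      (⟨x, by omega⟩, ⟨y, by omega⟩) :=
  rfl

@[simp] lemma wallVertex_inj {x y x' y' : ℕ} {hx : x < k} {hy : y < 2 * k} {hx' : x' < k}
    {hy' : y' < 2 * k} : wallVertex x y hx hy = wallVertex x' y' hx' hy' ↔ x = x' ∧ y = y' := by
  simp [wallVertex, Prod.ext_iff]

lemma wallSimple_adj_right {x y x' y' : ℕ} {hx : x < k} {hy : y < 2 * k} {hx' : x' < k}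
    {hy' : y' < 2 * k} (hxx' : x' = x) (hyy' : y' = y + 1) :
    (wallSimple k).Adj (wallVertex x y hx hy) (wallVertex x' y' hx' hy') := by
  show (wallPre k).Adj _ _
  simp [wallPre_adj_iff]
  omega

lemma wallSimple_adj_down {x y x' y' : ℕ} {hx : x < k} {hy : y < 2 * k} {hx' : x' < k}
    {hy' : y' < 2 * k} (hxx' : x' = x + 1) (hyy' : y' = y) (hxy : (x + y) % 2 = 0) :
    (wallSimple k).Adj (wallVertex x y hx hy) (wallVertex x' y' hx' hy') := by
  show (wallPre k).Adj _ _
  simp [wallPre_adj_iff]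
  omega

lemma isDoubledEdge_wallVertex {x y y' : ℕ} {hx : x < k} {hy : y < 2 * k} {hy' : y' < 2 * k}
    (hyy' : y' = y + 1) (hy2 : y % 2 = 0) :
    isDoubledEdge k s(wallVertex x y hx hy, wallVertex x y' hx hy') :=
  ⟨_, _, rfl, rfl, hyy', hy2⟩

abbrev WallPlusEdge (k : ℕ) : Type :=
  (wallSimple k).edgeSet ⊕
    {p : Sym2 (wallVerts k) // p ∈ (wallSimple k).edgeSet ∧ isDoubledEdge k p}

def wallEdge (a b : wallVerts k) (h : (wallSimple k).Adj a b) : WallPlusEdge k :=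
  .inl ⟨s(a, b), h⟩

def wallEdgeCopy (a b : wallVerts k) (h : (wallSimple k).Adj a b)
    (hd : isDoubledEdge k s(a, b)) : WallPlusEdge k :=
  .inr ⟨s(a, b), h, hd⟩

lemma ends_wallEdge (a b : wallVerts k) (h : (wallSimple k).Adj a b) :
    (WallPlus k).ends (wallEdge a b h) = s(a, b) :=
  rfl

lemma ends_wallEdgeCopy (a b : wallVerts k) (h : (wallSimple k).Adj a b)
    (hd : isDoubledEdge k s(a, b)) : (WallPlus k).ends (wallEdgeCopy a b h hd) = s(a, b) :=
  rfl

def wallCoordSum : Sym2 (wallVerts k) → ℕ × ℕ :=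
  Sym2.lift ⟨fun a b => ((a.1.1 : ℕ) + b.1.1, (a.1.2 : ℕ) + b.1.2),
    fun _ _ => by simp [add_comm]⟩

/-- The grid edge (coordinates of source and target) whose path uses a given edge of `W⁺_k`,
read off the coordinate sums `(X, Y)` of its endpoints: a first copy lies on the path of the grid
edge leaving `(X / 2, Y / 4)`, rightwards if `X` is even and downwards if `X` is odd; a second copy
in row `r = X / 2` lies on the path of the vertical grid edge leaving the odd one of rows `r - 1`
and `r`. -/
def wallEdgeOwner : WallPlusEdge k → (ℕ × ℕ) × (ℕ × ℕ)
  | .inl x =>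
    match wallCoordSum x.1 with
    | (X, Y) => if X % 2 = 0 then ((X / 2, Y / 4), (X / 2, Y / 4 + 1))
        else ((X / 2, Y / 4), (X / 2 + 1, Y / 4))
  | .inr x =>
    match wallCoordSum x.1 with
    | (X, Y) => ((X / 2 - (X / 2 + 1) % 2, Y / 4), (X / 2 - (X / 2 + 1) % 2 + 1, Y / 4))

@[simp] lemma wallEdgeOwner_wallEdge {x y x' y' : ℕ} {hx : x < k} {hy : y < 2 * k}
    {hx' : x' < k} {hy' : y' < 2 * k} (h : (wallSimple k).Adj _ _) :
    wallEdgeOwner (wallEdge (wallVertex x y hx hy) (wallVertex x' y' hx' hy') h) =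
      if (x + x') % 2 = 0 then (((x + x') / 2, (y + y') / 4), ((x + x') / 2, (y + y') / 4 + 1))
        else (((x + x') / 2, (y + y') / 4), ((x + x') / 2 + 1, (y + y') / 4)) :=
  rfl

@[simp] lemma wallEdgeOwner_wallEdgeCopy {x y x' y' : ℕ} {hx : x < k} {hy : y < 2 * k}
    {hx' : x' < k} {hy' : y' < 2 * k} (h : (wallSimple k).Adj _ _) (hd : isDoubledEdge k _) :
    wallEdgeOwner (wallEdgeCopy (wallVertex x y hx hy) (wallVertex x' y' hx' hy') h hd) =
      (((x + x') / 2 - ((x + x') / 2 + 1) % 2, (y + y') / 4),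
        ((x + x') / 2 - ((x + x') / 2 + 1) % 2 + 1, (y + y') / 4)) :=
  rfl

end Wall

section Model

variable {k : ℕ}

def branchVertex (a : Fin k × Fin k) : wallVerts k :=
  wallVertex a.1 (2 * a.2) a.1.isLt (by omega)

lemma branchVertex_injective : Function.Injective (branchVertex (k := k)) := by
  intro a b h
  simp only [branchVertex, wallVertex_inj] at h
  exact Prod.ext (Fin.ext h.1) (Fin.ext (by omega))

lemma branchVertex_col_even (a : Fin k × Fin k) :
    ((branchVertex a : Fin (k + 1) × Fin (2 * k + 2)).2 : ℕ) % 2 = 0 := by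
  simp [branchVertex]

def IsRightStep (a b : Fin k × Fin k) : Prop := (a.1 : ℕ) = b.1 ∧ (a.2 : ℕ) + 1 = b.2

def IsDownStep (a b : Fin k × Fin k) : Prop := (a.2 : ℕ) = b.2 ∧ (a.1 : ℕ) + 1 = b.1

def rightPath (a b : Fin k × Fin k) (h : IsRightStep a b) :
    (WallPlus k).Walk (branchVertex a) (branchVertex b) :=
  .cons (wallEdge _ (wallVertex a.1 (2 * a.2 + 1) a.1.isLt (by omega))
      (wallSimple_adj_right rfl rfl)) (ends_wallEdge _ _ _) <|
  .cons (wallEdge _ _ (wallSimple_adj_right h.1.symm (by simp [← h.2]; ring)))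
    (ends_wallEdge _ _ _) <|
  .nil _

def downPathEven (a b : Fin k × Fin k) (h : IsDownStep a b) (ha : (a.1 : ℕ) % 2 = 0) :
    (WallPlus k).Walk (branchVertex a) (branchVertex b) :=
  .cons (wallEdge _ _ (wallSimple_adj_down h.2.symm (by simp [h.1]) (by omega)))
    (ends_wallEdge _ _ _) <|
  .nil _

def downPathOdd (a b : Fin k × Fin k) (h : IsDownStep a b) (ha : (a.1 : ℕ) % 2 = 1) :
    (WallPlus k).Walk (branchVertex a) (branchVertex b) :=
  .cons (wallEdgeCopy _ (wallVertex a.1 (2 * a.2 + 1) a.1.isLt (by omega))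
      (wallSimple_adj_right rfl rfl) (isDoubledEdge_wallVertex rfl (by omega)))
    (ends_wallEdgeCopy _ _ _ _) <|
  .cons (wallEdge _ (wallVertex b.1 (2 * b.2 + 1) b.1.isLt (by omega))
      (wallSimple_adj_down h.2.symm (by simp [h.1]) (by omega))) (ends_wallEdge _ _ _) <|
  .cons (wallEdgeCopy _ _ (wallSimple_adj_right rfl rfl) (isDoubledEdge_wallVertex rfl (by omega)))
    ((ends_wallEdgeCopy _ _ _ _).trans Sym2.eq_swap) <|
  .nil _

lemma exists_orientation (e : (gridGraph k k).edgeSet) :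
    ∃ p : (Fin k × Fin k) × (Fin k × Fin k),
      e.1 = s(p.1, p.2) ∧ (IsRightStep p.1 p.2 ∨ IsDownStep p.1 p.2) := by
  obtain ⟨q, hq⟩ := e
  induction q using Sym2.ind with
  | _ a b =>
    rcases hq with ⟨h1, h2 | h2⟩ | ⟨h1, h2 | h2⟩
    · exact ⟨(a, b), rfl, .inl ⟨congrArg Fin.val h1, h2⟩⟩
    · exact ⟨(b, a), Sym2.eq_swap, .inl ⟨congrArg Fin.val h1.symm, h2⟩⟩
    · exact ⟨(a, b), rfl, .inr ⟨congrArg Fin.val h1, h2⟩⟩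
    · exact ⟨(b, a), Sym2.eq_swap, .inr ⟨congrArg Fin.val h1.symm, h2⟩⟩

noncomputable def gridSrc (e : (gridGraph k k).edgeSet) : Fin k × Fin k :=
  (exists_orientation e).choose.1

noncomputable def gridTgt (e : (gridGraph k k).edgeSet) : Fin k × Fin k :=
  (exists_orientation e).choose.2

lemma gridEdge_eq (e : (gridGraph k k).edgeSet) : e.1 = s(gridSrc e, gridTgt e) :=
  (exists_orientation e).choose_spec.1

lemma isRightStep_or_isDownStep (e : (gridGraph k k).edgeSet) :
    IsRightStep (gridSrc e) (gridTgt e) ∨ IsDownStep (gridSrc e) (gridTgt e) :=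
  (exists_orientation e).choose_spec.2

def gridCoords (a : Fin k × Fin k) : ℕ × ℕ := (a.1, a.2)

lemma gridCoords_injective : Function.Injective (gridCoords (k := k)) := by
  intro a b h
  simp only [gridCoords, Prod.mk.injEq] at h
  exact Prod.ext (Fin.ext h.1) (Fin.ext h.2)

lemma gridCoords_src_tgt_injective :
    Function.Injective fun e : (gridGraph k k).edgeSet =>
      (gridCoords (gridSrc e), gridCoords (gridTgt e)) := by
  intro e f h
  simp only [Prod.mk.injEq] at h
  apply Subtype.ext
  rw [gridEdge_eq e, gridEdge_eq f, gridCoords_injective h.1, gridCoords_injective h.2]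

noncomputable def gridPath (e : (gridGraph k k).edgeSet) :
    (WallPlus k).Walk (branchVertex (gridSrc e)) (branchVertex (gridTgt e)) :=
  if hr : IsRightStep (gridSrc e) (gridTgt e) then rightPath _ _ hr
  else if ha : ((gridSrc e).1 : ℕ) % 2 = 0 then
    downPathEven _ _ ((isRightStep_or_isDownStep e).resolve_left hr) ha
  else downPathOdd _ _ ((isRightStep_or_isDownStep e).resolve_left hr) (by omega)

lemma gridPath_rec
    (P : ∀ a b : Fin k × Fin k, (WallPlus k).Walk (branchVertex a) (branchVertex b) → Prop)
    (right : ∀ a b h, P a b (rightPath a b h))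
    (downEven : ∀ a b h ha, P a b (downPathEven a b h ha))
    (downOdd : ∀ a b h ha, P a b (downPathOdd a b h ha)) (e : (gridGraph k k).edgeSet) :
    P _ _ (gridPath e) := by
  unfold gridPath
  split_ifs
  exacts [right _ _ _, downEven _ _ _ _, downOdd _ _ _ _]

lemma isPath_gridPath (e : (gridGraph k k).edgeSet) : (gridPath e).IsPath := by
  refine gridPath_rec (fun _ _ p => p.IsPath) ?_ ?_ ?_ e
  all_goals
    intro a b ⟨h1, h2⟩
    simp [Walk.IsPath, rightPath, downPathEven, downPathOdd, branchVertex]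
    omega

lemma col_odd_of_mem_interior_gridPath (e : (gridGraph k k).edgeSet) :
    ∀ v ∈ (gridPath e).interior, ((v : Fin (k + 1) × Fin (2 * k + 2)).2 : ℕ) % 2 = 1 := by
  refine gridPath_rec
    (fun _ _ p => ∀ v ∈ p.interior, ((v : Fin (k + 1) × Fin (2 * k + 2)).2 : ℕ) % 2 = 1)
    ?_ ?_ ?_ e
  all_goals
    intro a b _
    simp [Walk.interior, rightPath, downPathEven, downPathOdd, branchVertex]

lemma branchVertex_not_mem_interior_gridPath (e : (gridGraph k k).edgeSet) (a : Fin k × Fin k) :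
    branchVertex a ∉ (gridPath e).interior := fun h => by
  have hodd := col_odd_of_mem_interior_gridPath e _ h
  have heven := branchVertex_col_even a
  omega

lemma wallEdgeOwner_eq_of_mem_edges_gridPath (e : (gridGraph k k).edgeSet) :
    ∀ x ∈ (gridPath e).edges,
      wallEdgeOwner x = (gridCoords (gridSrc e), gridCoords (gridTgt e)) := by
  refine gridPath_rec
    (fun a b p => ∀ x ∈ p.edges, wallEdgeOwner x = (gridCoords a, gridCoords b)) ?_ ?_ ?_ e
  all_goals
    intro a b ⟨h1, h2⟩
    simp [rightPath, downPathEven, downPathOdd, branchVertex, gridCoords]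
    split_ifs <;> simp only [Prod.mk.injEq] <;> omega

end Model

-- In the 0-indexed coordinates used here, the paper's columns `2j + 1` are the even columns.
theorem gamma_strong_immersion_wallPlus_general (k : ℕ) :
    ∃ m : Multigraph.StrongImmersionModel (Gamma k) (WallPlus k),
      ∀ x : Fin k × Fin k,
        (((m.vmap x : Fin (k + 1) × Fin (2 * k + 2))).2 : ℕ) % 2 = 0 := by
  refine ⟨{
    vmap := branchVertex
    vmap_inj := branchVertex_injective
    src := gridSrc
    tgt := gridTgt
    ends_eq := gridEdge_eq
    path := gridPath
    path_isPath := isPath_gridPath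
    edge_disjoint := Walk.edges_disjoint_of_owner gridPath wallEdgeOwner _
      gridCoords_src_tgt_injective wallEdgeOwner_eq_of_mem_edges_gridPath
    not_internal := branchVertex_not_mem_interior_gridPath }, branchVertex_col_even⟩

/-- For `k ≥ 2`, the grid `Γ_k` is a strong immersion of `W⁺_k`, with a
model whose branch vertices all lie in `{(i, 2j+1) : 1 ≤ i ≤ k+1, 0 ≤ j ≤ k}`
(in 0-indexed coordinates: their column index is even). -/
theorem gamma_strong_immersion_wallPlus (k : ℕ) (hk : 2 ≤ k) :
    ∃ m : Multigraph.StrongImmersionModel (Gamma k) (WallPlus k),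
      ∀ x : Fin k × Fin k,
        (((m.vmap x : Fin (k + 1) × Fin (2 * k + 2))).2 : ℕ) % 2 = 0 :=
  gamma_strong_immersion_wallPlus_general k
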